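/- arXiv:1511.02819 — 3 statements merged into one kernel-verified Lean document; each statement's English description precedes it below -/
import Mathlib

section
/- For a family {(Xᵢ, Uᵢ)}ᵢ∈I of U-equivalence spaces, the topology on ∏ Xᵢ induced by the product U-equivalence class ∏ Uᵢ equals the product of the topologies induced by the Uᵢ: T_{∏Uᵢ} = ∏ T_{Uᵢ}. -/
/-- `U` is an equivalence relation on `X`, viewed as a subset of `X × X`. -/
def IsEquivRel {X : Type*} (U : Set (X × X)) : Prop :=
  (∀ x, (x, x) ∈ U) ∧ (∀ x y, (x, y) ∈ U → (y, x) ∈ U) ∧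
    (∀ x y z, (x, y) ∈ U → (y, z) ∈ U → (x, z) ∈ U)

/-- A `U`-equivalence class on `X`: a nonempty collection of equivalence relations
closed under binary intersections. -/
def IsUClass {X : Type*} (𝒰 : Set (Set (X × X))) : Prop :=
  𝒰.Nonempty ∧ (∀ U ∈ 𝒰, IsEquivRel U) ∧ ∀ U ∈ 𝒰, ∀ V ∈ 𝒰, U ∩ V ∈ 𝒰

/-- `(f × f)⁻¹(V)`. -/
def preim2 {X Y : Type*} (f : X → Y) (V : Set (Y × Y)) : Set (X × X) :=
  {p | (f p.1, f p.2) ∈ V}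

/-- `f : (X,𝒰) → (Y,𝒱)` is `U`-equivalently continuous. -/
def UCont {X Y : Type*} (𝒰 : Set (Set (X × X))) (𝒱 : Set (Set (Y × Y))) (f : X → Y) : Prop :=
  ∀ V ∈ 𝒱, preim2 f V ∈ 𝒰

/-- `U[x] = {y | (x,y) ∈ U}`. -/
def cls {X : Type*} (U : Set (X × X)) (x : X) : Set X := {y | (x, y) ∈ U}

/-- The collection of all finite nonempty intersections of members of `S`. -/
def genClass {X : Type*} (S : Set (Set (X × X))) : Set (Set (X × X)) :=
  {U | ∃ T : Finset (Set (X × X)), ↑T ⊆ S ∧ T.Nonempty ∧ U = ⋂₀ ↑T}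

/-- The relative class `𝒱/A`, transported to the subtype `A`. -/
def relClass {Y : Type*} (𝒱 : Set (Set (Y × Y))) (A : Set Y) : Set (Set (A × A)) :=
  preim2 (Subtype.val : A → Y) '' 𝒱

/-- `f : (X,𝒰) → (Y,𝒱)` is `U`-equivalently open. -/
def UOpenMap {X Y : Type*} (𝒰 : Set (Set (X × X))) (𝒱 : Set (Set (Y × Y))) (f : X → Y) : Prop :=
  ∀ U ∈ 𝒰, ∃ V ∈ 𝒱, ∀ x, cls V (f x) ⊆ f '' cls U x

/-- The topology induced by a `U`-equivalence class, generated by the base `{U[x]}`. -/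
def UTop {X : Type*} (𝒰 : Set (Set (X × X))) : TopologicalSpace X :=
  TopologicalSpace.generateFrom {S | ∃ U ∈ 𝒰, ∃ x, S = cls U x}

/-- The product `U`-equivalence class, generated by preimages under the projections. -/
def prodClass {I : Type*} {X : I → Type*} (𝒰 : ∀ i, Set (Set (X i × X i))) :
    Set (Set ((∀ i, X i) × (∀ i, X i))) :=
  genClass {S | ∃ i, ∃ U ∈ 𝒰 i, S = preim2 (fun f => f i) U}

/-- A `U`-equivalence: a bijection which is `U`-equivalently continuous with
`U`-equivalently continuous inverse. -/
def IsUEquiv {X Y : Type*} (𝒰 : Set (Set (X × X))) (𝒱 : Set (Set (Y × Y))) (f : X → Y) : Prop :=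
  Function.Bijective f ∧ UCont 𝒰 𝒱 f ∧
    ∃ g : Y → X, Function.LeftInverse g f ∧ Function.RightInverse g f ∧ UCont 𝒱 𝒰 g

/-- A `U`-embedding: injective, and a `U`-equivalence onto its range with the relative class. -/
def IsUEmbedding {X Y : Type*} (𝒰 : Set (Set (X × X))) (𝒱 : Set (Set (Y × Y))) (f : X → Y) :
    Prop :=
  Function.Injective f ∧ IsUEquiv 𝒰 (relClass 𝒱 (Set.range f)) (Set.rangeFactorization f)

/-- Total boundedness of a `U`-equivalence space. -/
def TotallyBddU {X : Type*} (𝒰 : Set (Set (X × X))) : Prop :=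
  ∀ U ∈ 𝒰, ∃ t : Finset X, ∀ x : X, ∃ y ∈ t, (y, x) ∈ U

/-- `φ : (Y,𝒱) → Z` is transverse to `Y`: `(φ×φ)⁻¹(ΔZ) ∩ V = ΔY` for some `V ∈ 𝒱`. -/
def Transv {Y Z : Type*} (𝒱 : Set (Set (Y × Y))) (φ : Y → Z) : Prop :=
  ∃ V ∈ 𝒱, ∀ y y', (y, y') ∈ V → φ y = φ y' → y = y'

/-- `f : X → (Y,𝒱)` is a `U`-equivalent surjection. -/
def USurjOn {X Y : Type*} (𝒱 : Set (Set (Y × Y))) (f : X → Y) : Prop :=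
  ∀ y : Y, ∀ V ∈ 𝒱, ∃ x : X, y ∈ cls V (f x)

/-- `D` is `U`-equivalently dense in `(X,𝒰)`. -/
def UDense {X : Type*} (𝒰 : Set (Set (X × X))) (D : Set X) : Prop :=
  ∀ x : X, ∀ U ∈ 𝒰, ∃ a ∈ D, (a, x) ∈ U


/-!
The open sets `U[x]` are the balls of the topology, so it suffices to compare generators on both
sides. A ball `W[f]` of the product class is a finite intersection of balls `(U[f i])` pulled back
along projections, hence open for the product topology. Conversely each projection is
`U`-equivalently continuous, and `U`-equivalent continuity implies continuity because, `V` being an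
equivalence relation, every point `y ∈ V[z]` satisfies `V[y] ⊆ V[z]`.
-/

open TopologicalSpace Topology

theorem cls_preim2 {X Y : Type*} (f : X → Y) (V : Set (Y × Y)) (x : X) :
    cls (preim2 f V) x = f ⁻¹' cls V (f x) :=
  rfl

theorem cls_sInter {X : Type*} (T : Set (Set (X × X))) (x : X) :
    cls (⋂₀ T) x = ⋂ S ∈ T, cls S x := by
  ext y
  simp [cls, Set.mem_sInter]

theorem isOpen_cls {X : Type*} {𝒰 : Set (Set (X × X))} {U : Set (X × X)} (hU : U ∈ 𝒰) (x : X) :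
    IsOpen[UTop 𝒰] (cls U x) :=
  GenerateOpen.basic _ ⟨U, hU, x, rfl⟩

theorem IsEquivRel.cls_subset {X : Type*} {U : Set (X × X)} (hU : IsEquivRel U) {x y : X}
    (hy : y ∈ cls U x) : cls U y ⊆ cls U x :=
  fun _ hz => hU.2.2 _ _ _ hy hz

theorem UCont.continuous {X Y : Type*} {𝒰 : Set (Set (X × X))} {𝒱 : Set (Set (Y × Y))}
    {f : X → Y} (hf : UCont 𝒰 𝒱 f) (h𝒱 : ∀ V ∈ 𝒱, IsEquivRel V) :
    Continuous[UTop 𝒰, UTop 𝒱] f := by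
  let _ := UTop 𝒰
  refine continuous_generateFrom_iff.2 ?_
  rintro _ ⟨V, hV, y, rfl⟩
  refine isOpen_iff_forall_mem_open.2 fun x hx =>
    ⟨cls (preim2 f V) x, ?_, isOpen_cls (hf V hV) x, (h𝒱 V hV).1 (f x)⟩
  exact Set.preimage_mono ((h𝒱 V hV).cls_subset hx)

theorem isOpen_cls_of_mem_genClass {X : Type*} [TopologicalSpace X] {𝒮 : Set (Set (X × X))}
    (h𝒮 : ∀ S ∈ 𝒮, ∀ x, IsOpen (cls S x)) {W : Set (X × X)} (hW : W ∈ genClass 𝒮) (x : X) :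
    IsOpen (cls W x) := by
  obtain ⟨T, hT𝒮, -, rfl⟩ := hW
  rw [cls_sInter]
  exact isOpen_biInter_finset fun S hS => h𝒮 S (hT𝒮 hS) x

theorem preim2_eval_mem_prodClass {I : Type*} {X : I → Type*} (𝒰 : ∀ i, Set (Set (X i × X i)))
    {i : I} {U : Set (X i × X i)} (hU : U ∈ 𝒰 i) :
    preim2 (fun f : ∀ j, X j => f i) U ∈ prodClass 𝒰 :=
  ⟨{preim2 (fun f => f i) U}, by simpa using ⟨i, U, hU, rfl⟩, Finset.singleton_nonempty _,
    by simp⟩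

theorem stmt9 {I : Type*} {Xi : I → Type*}
    (𝒰 : ∀ i, Set (Set (Xi i × Xi i))) (h𝒰 : ∀ i, IsUClass (𝒰 i)) :
    UTop (prodClass 𝒰) = @Pi.topologicalSpace I Xi (fun i => UTop (𝒰 i)) := by
  let _ : ∀ i, TopologicalSpace (Xi i) := fun i => UTop (𝒰 i)
  apply le_antisymm
  · exact le_iInf fun i =>
      (UCont.continuous (fun _ hU => preim2_eval_mem_prodClass 𝒰 hU) (h𝒰 i).2.1).le_induced
  · refine le_generateFrom ?_
    rintro _ ⟨W, hW, f, rfl⟩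
    refine isOpen_cls_of_mem_genClass ?_ hW f
    rintro _ ⟨i, U, hU, rfl⟩ g
    rw [cls_preim2]
    exact (continuous_apply i).isOpen_preimage _ (isOpen_cls hU (g i))
end

section
/- Let (X,U) be a rich U-equivalence space (X² ∈ U) and A ⊆ X. The following are equivalent: (a) the inclusion i : (A, U/A) → (X,U) is U-equivalently open; (b) for each U ∈ U there exists V ∈ U with V[x] ⊆ U[x] ∩ A for all x ∈ A; (c) there exists V₀ ∈ U with V₀[x] ⊆ A for all x ∈ A. -/
theorem image_val_cls_preim2 {X : Type*} {A : Set X} (U : Set (X × X)) (x : A) :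
    Subtype.val '' cls (preim2 (Subtype.val : A → X) U) x = cls U x ∩ A := by
  ext y
  constructor
  · rintro ⟨a, ha, rfl⟩
    exact ⟨ha, a.2⟩
  · rintro ⟨hy, hyA⟩
    exact ⟨⟨y, hyA⟩, hy, rfl⟩

theorem uOpenMap_subtypeVal_iff {X : Type*} (𝒰 : Set (Set (X × X))) (A : Set X) :
    UOpenMap (relClass 𝒰 A) 𝒰 (Subtype.val : A → X) ↔
      ∀ U ∈ 𝒰, ∃ V ∈ 𝒰, ∀ x ∈ A, cls V x ⊆ cls U x ∩ A := by
  simp only [UOpenMap, relClass, Set.forall_mem_image, image_val_cls_preim2, Subtype.forall]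

theorem exists_cls_subset_inter_of_cls_subset {X : Type*} {𝒰 : Set (Set (X × X))}
    (h𝒰 : ∀ U ∈ 𝒰, ∀ V ∈ 𝒰, U ∩ V ∈ 𝒰) {A : Set X} {V₀ : Set (X × X)} (hV₀ : V₀ ∈ 𝒰)
    (hA : ∀ x ∈ A, cls V₀ x ⊆ A) {U : Set (X × X)} (hU : U ∈ 𝒰) :
    ∃ V ∈ 𝒰, ∀ x ∈ A, cls V x ⊆ cls U x ∩ A :=
  ⟨U ∩ V₀, h𝒰 U hU V₀ hV₀, fun x hx _ hy => ⟨hy.1, hA x hx hy.2⟩⟩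

theorem stmt10 {X : Type*} (𝒰 : Set (Set (X × X))) (h𝒰 : IsUClass 𝒰)
    (hrich : (Set.univ : Set (X × X)) ∈ 𝒰) (A : Set X) :
    List.TFAE [
      UOpenMap (relClass 𝒰 A) 𝒰 (Subtype.val : A → X),
      ∀ U ∈ 𝒰, ∃ V ∈ 𝒰, ∀ x ∈ A, cls V x ⊆ cls U x ∩ A,
      ∃ V₀ ∈ 𝒰, ∀ x ∈ A, cls V₀ x ⊆ A] := by
  tfae_have 1 ↔ 2 := uOpenMap_subtypeVal_iff 𝒰 A
  tfae_have 2 → 3 := fun h => by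
    obtain ⟨V, hV, hVA⟩ := h Set.univ hrich
    exact ⟨V, hV, fun x hx => (hVA x hx).trans Set.inter_subset_right⟩
  tfae_have 3 → 2 := fun ⟨V₀, hV₀, hA⟩ _ hU =>
    exists_cls_subset_inter_of_cls_subset h𝒰.2.2 hV₀ hA hU
  tfae_finish
end

section
/- Let (X,U), (Y,V), (Z,W) be U-equivalence spaces with U rich, let α, β : X → Y be U-equivalently continuous, and let φ : Y → Z be transverse to Y. If φ ∘ α = φ ∘ β, then the coincidence set C(α,β) = {x : α(x) = β(x)} is U-equivalently open in X, i.e. there exists U₀ ∈ U with U₀[x] ⊆ C(α,β) for all x ∈ C(α,β). -/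
/-!
Take `V` witnessing the transversality of `φ` and `U₀ = (α×α)⁻¹V ∩ (β×β)⁻¹V`. If `α x = β x`
and `y ∈ U₀[x]`, then `α y ~ α x = β x ~ β y` in the equivalence relation `V`, and since
`φ (α y) = φ (β y)`, transversality forces `α y = β y`.
-/

theorem IsUClass.preim2_inter_mem {X Y : Type*} {𝒰 : Set (Set (X × X))}
    {𝒱 : Set (Set (Y × Y))} (h𝒰 : IsUClass 𝒰) {α β : X → Y} (hα : UCont 𝒰 𝒱 α)
    (hβ : UCont 𝒰 𝒱 β) {V : Set (Y × Y)} (hV : V ∈ 𝒱) :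
    preim2 α V ∩ preim2 β V ∈ 𝒰 :=
  h𝒰.2.2 _ (hα V hV) _ (hβ V hV)

theorem IsEquivRel.mem_of_mem_cls_preim2_inter {X Y : Type*} {V : Set (Y × Y)}
    (hV : IsEquivRel V) {α β : X → Y} {x y : X} (hx : α x = β x)
    (hy : y ∈ cls (preim2 α V ∩ preim2 β V) x) : (α y, β y) ∈ V := by
  obtain ⟨-, hsymm, htrans⟩ := hV
  obtain ⟨hαy, hβy⟩ := hy
  exact htrans _ _ _ (hsymm _ _ hαy) (hx ▸ hβy)

theorem stmt11_general {X Y Z : Type*} (𝒰 : Set (Set (X × X))) (𝒱 : Set (Set (Y × Y)))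
    (h𝒰 : IsUClass 𝒰) (h𝒱 : IsUClass 𝒱)
    (α β : X → Y) (hα : UCont 𝒰 𝒱 α) (hβ : UCont 𝒰 𝒱 β)
    (φ : Y → Z) (hφ : Transv 𝒱 φ) (hcomm : φ ∘ α = φ ∘ β) :
    ∃ U₀ ∈ 𝒰, ∀ x ∈ {x' : X | α x' = β x'}, cls U₀ x ⊆ {x' : X | α x' = β x'} := by
  obtain ⟨V, hV, hinj⟩ := hφ
  refine ⟨preim2 α V ∩ preim2 β V, h𝒰.preim2_inter_mem hα hβ hV, fun x hx y hy => ?_⟩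
  exact hinj _ _ ((h𝒱.2.1 V hV).mem_of_mem_cls_preim2_inter hx hy) (congrFun hcomm y)

theorem stmt11 {X Y Z : Type*} (𝒰 : Set (Set (X × X))) (𝒱 : Set (Set (Y × Y)))
    (𝒲 : Set (Set (Z × Z))) (h𝒰 : IsUClass 𝒰) (h𝒱 : IsUClass 𝒱) (h𝒲 : IsUClass 𝒲)
    (hrich : (Set.univ : Set (X × X)) ∈ 𝒰)
    (α β : X → Y) (hα : UCont 𝒰 𝒱 α) (hβ : UCont 𝒰 𝒱 β)
    (φ : Y → Z) (hφ : Transv 𝒱 φ) (hcomm : φ ∘ α = φ ∘ β) :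
    ∃ U₀ ∈ 𝒰, ∀ x ∈ {x' : X | α x' = β x'}, cls U₀ x ⊆ {x' : X | α x' = β x'} :=
  stmt11_general 𝒰 𝒱 h𝒰 h𝒱 α β hα hβ φ hφ hcomm
end
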